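/- Let f be a sense-preserving harmonic mapping on the unit disk D and let γ(s), 0 ≤ s ≤ L, be a smooth curve in D parametrized by hyperbolic arclength, so that γ'(s) = (1-|γ(s)|²)e^{iθ(s)} for some real function θ. Then (d/ds) log((1-|γ(s)|²)·J_f(γ(s))^{1/2}) = 2·Re(A_f(γ(s))·e^{iθ(s)}) for all s. Consequently, if |A_f(z)| ≤ α on D, then for any z₀, z₁ ∈ D, exp(-2αρ(z₀,z₁)) ≤ ((1-|z₁|²)J_f(z₁)^{1/2})/((1-|z₀|²)J_f(z₀)^{1/2}) ≤ exp(2αρ(z₀,z₁)), where ρ is the hyperbolic (Poincaré) distance on D. -/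

import Mathlib

open Complex Metric Set

noncomputable section

/-- The open unit disk in ℂ. -/
def 𝔻 : Set ℂ := Metric.ball (0 : ℂ) 1

/-- Dilatation ω = g'/h' of a harmonic mapping f = h + conj g. -/
def dil (h g : ℂ → ℂ) (z : ℂ) : ℂ := deriv g z / deriv h z

/-- Harmonic pre-Schwarzian P_f = h''/h' - conj(ω)·ω'/(1-|ω|²). -/
def Pf (h g : ℂ → ℂ) (z : ℂ) : ℂ :=
  deriv (deriv h) z / deriv h z -
    (starRingEnd ℂ) (dil h g z) * deriv (dil h g) z /
      (((1 - ‖(dil h g z)‖ ^ 2 : ℝ) : ℂ))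

/-- The operator A_f(z) = ((1-|z|²)/2)·P_f(z) - conj z. -/
def Af (h g : ℂ → ℂ) (z : ℂ) : ℂ :=
  (((1 - ‖z‖ ^ 2 : ℝ) : ℂ)) / 2 * Pf h g z - (starRingEnd ℂ) z

/-- The operator A_φ for an analytic φ. -/
def Aan (φ : ℂ → ℂ) (z : ℂ) : ℂ :=
  (((1 - ‖z‖ ^ 2 : ℝ) : ℂ)) / 2 * (deriv (deriv φ) z / deriv φ z) -
    (starRingEnd ℂ) z

/-- Jacobian J_f = |h'|² - |g'|². -/
def Jf (h g : ℂ → ℂ) (z : ℂ) : ℝ :=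
  ‖(deriv h z)‖ ^ 2 - ‖(deriv g z)‖ ^ 2

/-- f = h + conj g is a sense-preserving harmonic mapping on 𝔻. -/
def SensePreserving (h g : ℂ → ℂ) : Prop :=
  (∀ z ∈ 𝔻, AnalyticAt ℂ h z) ∧ (∀ z ∈ 𝔻, AnalyticAt ℂ g z) ∧
  (∀ z ∈ 𝔻, deriv h z ≠ 0) ∧ (∀ z ∈ 𝔻, ‖(dil h g z)‖ < 1)

/-- Hyperbolic (Poincaré) distance on 𝔻, with density 1/(1-|z|²). -/
def hypDist (z w : ℂ) : ℝ :=
  (1 / 2) * Real.log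
    ((1 + ‖((z - w) / (1 - (starRingEnd ℂ) w * z))‖) /
     (1 - ‖((z - w) / (1 - (starRingEnd ℂ) w * z))‖))

/-- Wirtinger derivative ∂_z of a real-valued function. -/
def wirtinger (u : ℂ → ℝ) (z : ℂ) : ℂ :=
  ((fderiv ℝ u z 1 : ℝ) : ℂ) / 2 - Complex.I * ((fderiv ℝ u z Complex.I : ℝ) : ℂ) / 2

/-!
Since `J_f = |h'|² (1 - |ω|²)` with `ω = g'/h'`, the logarithm of `(1 - |z|²) J_f^{1/2}` splits as
`log (1 - |z|²) + log |h'| + ½ log (1 - |ω|²)`. Differentiating each term along a curve and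
substituting `γ' = (1 - |γ|²) e^{iθ}` collects the three terms into `2 Re (A_f e^{iθ})`.

For the distance estimate, `w ↦ (z₀ + w) / (1 + z̄₀ w)` is a hyperbolic isometry, so it carries the
unit-speed radial geodesic `s ↦ η tanh s` to a unit-speed curve which starts at `z₀` and, for a
suitable unit `η`, reaches `z₁` at time `artanh |(z₁ - z₀) / (1 - z̄₀ z₁)| = ρ(z₀, z₁)`. The mean
value inequality along this curve bounds the change of the logarithm by `2 α ρ(z₀, z₁)`.
-/

open scoped ComplexConjugate Topology

lemma mem_𝔻_iff {z : ℂ} : z ∈ 𝔻 ↔ ‖z‖ < 1 := mem_ball_zero_iff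

lemma one_sub_norm_sq_pos {z : ℂ} (hz : ‖z‖ < 1) : 0 < 1 - ‖z‖ ^ 2 :=
  sub_pos.2 (pow_lt_one₀ (norm_nonneg z) hz two_ne_zero)

lemma HasDerivAt.log_norm_sq {F : ℝ → ℂ} {F' : ℂ} {s : ℝ} (hF : HasDerivAt F F' s)
    (h0 : F s ≠ 0) :
    HasDerivAt (fun t => Real.log (‖F t‖ ^ 2)) (2 * (F' / F s).re) s := by
  refine (hF.norm_sq.log (by positivity)).congr_deriv ?_
  rw [Complex.inner, div_eq_mul_inv F', Complex.inv_def, ← mul_assoc, Complex.re_mul_ofReal,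
    Complex.normSq_eq_norm_sq]
  ring

lemma HasDerivAt.log_one_sub_norm_sq {F : ℝ → ℂ} {F' : ℂ} {s : ℝ} (hF : HasDerivAt F F' s)
    (h1 : ‖F s‖ < 1) :
    HasDerivAt (fun t => Real.log (1 - ‖F t‖ ^ 2))
      (-2 * (conj (F s) * F' / ((1 - ‖F s‖ ^ 2 : ℝ) : ℂ)).re) s := by
  refine ((hF.norm_sq.const_sub 1).log (one_sub_norm_sq_pos h1).ne').congr_deriv ?_
  rw [Complex.inner, Complex.div_ofReal_re, mul_comm F']
  ring

lemma Jf_eq_mul {h g : ℂ → ℂ} {z : ℂ} (hz : deriv h z ≠ 0) :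
    Jf h g z = ‖deriv h z‖ ^ 2 * (1 - ‖dil h g z‖ ^ 2) := by
  rw [Jf, dil, norm_div]
  field_simp

def scaledJac (h g : ℂ → ℂ) (z : ℂ) : ℝ := (1 - ‖z‖ ^ 2) * √(Jf h g z)

namespace SensePreserving

variable {h g : ℂ → ℂ} {z : ℂ}

lemma deriv_ne_zero (hf : SensePreserving h g) (hz : z ∈ 𝔻) : deriv h z ≠ 0 := hf.2.2.1 z hz

lemma norm_dil_lt_one (hf : SensePreserving h g) (hz : z ∈ 𝔻) : ‖dil h g z‖ < 1 :=
  hf.2.2.2 z hz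

lemma analyticAt_deriv (hf : SensePreserving h g) (hz : z ∈ 𝔻) : AnalyticAt ℂ (deriv h) z :=
  (hf.1 z hz).deriv

lemma analyticAt_dil (hf : SensePreserving h g) (hz : z ∈ 𝔻) : AnalyticAt ℂ (dil h g) z :=
  (hf.2.1 z hz).deriv.div (hf.analyticAt_deriv hz) (hf.deriv_ne_zero hz)

lemma Jf_pos (hf : SensePreserving h g) (hz : z ∈ 𝔻) : 0 < Jf h g z := by
  rw [Jf_eq_mul (hf.deriv_ne_zero hz)]
  exact mul_pos (pow_pos (norm_pos_iff.2 (hf.deriv_ne_zero hz)) 2)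
    (one_sub_norm_sq_pos (hf.norm_dil_lt_one hz))

lemma scaledJac_pos (hf : SensePreserving h g) (hz : z ∈ 𝔻) : 0 < scaledJac h g z :=
  mul_pos (one_sub_norm_sq_pos (mem_𝔻_iff.1 hz)) (Real.sqrt_pos.2 (hf.Jf_pos hz))

lemma log_scaledJac_eq (hf : SensePreserving h g) (hz : z ∈ 𝔻) :
    Real.log (scaledJac h g z) =
      Real.log (1 - ‖z‖ ^ 2) + Real.log (‖deriv h z‖ ^ 2) / 2
        + Real.log (1 - ‖dil h g z‖ ^ 2) / 2 := by
  have h₁ := one_sub_norm_sq_pos (mem_𝔻_iff.1 hz)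
  have h₂ : 0 < ‖deriv h z‖ ^ 2 := pow_pos (norm_pos_iff.2 (hf.deriv_ne_zero hz)) 2
  have h₃ := one_sub_norm_sq_pos (hf.norm_dil_lt_one hz)
  rw [scaledJac, Real.log_mul h₁.ne' (Real.sqrt_pos.2 (hf.Jf_pos hz)).ne',
    Real.log_sqrt (hf.Jf_pos hz).le, Jf_eq_mul (hf.deriv_ne_zero hz), Real.log_mul h₂.ne' h₃.ne']
  ring

theorem hasDerivAt_log_scaledJac_comp (hf : SensePreserving h g) {γ : ℝ → ℂ} {γ' : ℂ}
    {s : ℝ} (hs : γ s ∈ 𝔻) (hγ : HasDerivAt γ γ' s) :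
    HasDerivAt (fun t => Real.log (scaledJac h g (γ t)))
      ((γ' * (Pf h g (γ s) - 2 * conj (γ s) / ((1 - ‖γ s‖ ^ 2 : ℝ) : ℂ))).re) s := by
  have hA := hγ.log_one_sub_norm_sq (mem_𝔻_iff.1 hs)
  have hB := ((hf.analyticAt_deriv hs).differentiableAt.hasDerivAt.comp s hγ).log_norm_sq
    (hf.deriv_ne_zero hs)
  have hC := ((hf.analyticAt_dil hs).differentiableAt.hasDerivAt.comp s hγ).log_one_sub_norm_sq
    (hf.norm_dil_lt_one hs)
  have hnhds : ∀ᶠ t in 𝓝 s, γ t ∈ 𝔻 :=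
    hγ.continuousAt.preimage_mem_nhds (isOpen_ball.mem_nhds hs)
  refine (((hA.add (hB.div_const 2)).add (hC.div_const 2)).congr_of_eventuallyEq ?_).congr_deriv ?_
  · filter_upwards [hnhds] with t ht using hf.log_scaledJac_eq ht
  · set c : ℝ := 1 - ‖γ s‖ ^ 2
    set c' : ℝ := 1 - ‖dil h g (γ s)‖ ^ 2
    -- real scalars, so that `re_ofReal_mul` can pull them out of the real part
    have key : γ' * (Pf h g (γ s) - 2 * conj (γ s) / (c : ℂ)) =
        ((-2 : ℝ) : ℂ) * (conj (γ s) * γ' / (c : ℂ))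
          + ((2 : ℝ) : ℂ) * (deriv (deriv h) (γ s) * γ' / deriv h (γ s)) / ((2 : ℝ) : ℂ)
          + ((-2 : ℝ) : ℂ) * (conj (dil h g (γ s)) * (deriv (dil h g) (γ s) * γ') / (c' : ℂ))
            / ((2 : ℝ) : ℂ) := by
      simp only [Pf, c']
      push_cast
      ring
    rw [key]
    simp only [Complex.add_re, Complex.div_ofReal_re, Complex.re_ofReal_mul]
    rfl

theorem hasDerivAt_log_scaledJac_of_arclength (hf : SensePreserving h g) {γ : ℝ → ℂ} {e : ℂ}
    {s : ℝ} (hs : γ s ∈ 𝔻) (hγ : HasDerivAt γ (((1 - ‖γ s‖ ^ 2 : ℝ) : ℂ) * e) s) :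
    HasDerivAt (fun t => Real.log (scaledJac h g (γ t))) (2 * (Af h g (γ s) * e).re) s := by
  refine (hf.hasDerivAt_log_scaledJac_comp hs hγ).congr_deriv ?_
  have hc : ((1 - ‖γ s‖ ^ 2 : ℝ) : ℂ) ≠ 0 :=
    Complex.ofReal_ne_zero.2 (one_sub_norm_sq_pos (mem_𝔻_iff.1 hs)).ne'
  rw [Af, ← Complex.re_ofReal_mul]
  congr 1
  field_simp
  push_cast
  ring

end SensePreserving

def moebius (a w : ℂ) : ℂ := (a + w) / (1 + conj a * w)

lemma one_add_conj_mul_ne_zero {a w : ℂ} (ha : ‖a‖ < 1) (hw : ‖w‖ < 1) :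
    1 + conj a * w ≠ 0 := by
  intro h0
  have : ‖conj a * w‖ < 1 := by
    rw [norm_mul, RCLike.norm_conj]
    exact mul_lt_one_of_nonneg_of_lt_one_left (norm_nonneg a) ha hw.le
  rw [← neg_eq_of_add_eq_zero_right h0, norm_neg, norm_one] at this
  exact lt_irrefl _ this

lemma norm_sq_one_add_conj_mul_sub_norm_sq_add (a w : ℂ) :
    ‖1 + conj a * w‖ ^ 2 - ‖a + w‖ ^ 2 = (1 - ‖a‖ ^ 2) * (1 - ‖w‖ ^ 2) := by
  simp only [← Complex.normSq_eq_norm_sq, Complex.normSq_apply, Complex.add_re, Complex.add_im,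
    Complex.mul_re, Complex.mul_im, Complex.conj_re, Complex.conj_im, Complex.one_re,
    Complex.one_im]
  ring

lemma one_sub_norm_sq_moebius {a w : ℂ} (hD : 1 + conj a * w ≠ 0) :
    1 - ‖moebius a w‖ ^ 2 = (1 - ‖a‖ ^ 2) * (1 - ‖w‖ ^ 2) / ‖1 + conj a * w‖ ^ 2 := by
  rw [← norm_sq_one_add_conj_mul_sub_norm_sq_add, moebius, norm_div, div_pow, sub_div,
    div_self (pow_ne_zero 2 (norm_ne_zero_iff.2 hD))]

lemma norm_moebius_lt_one {a w : ℂ} (ha : ‖a‖ < 1) (hw : ‖w‖ < 1) : ‖moebius a w‖ < 1 := by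
  have hD := one_add_conj_mul_ne_zero ha hw
  have hpos : 0 < 1 - ‖moebius a w‖ ^ 2 := by
    rw [one_sub_norm_sq_moebius hD]
    exact div_pos (mul_pos (one_sub_norm_sq_pos ha) (one_sub_norm_sq_pos hw))
      (pow_pos (norm_pos_iff.2 hD) 2)
  nlinarith [norm_nonneg (moebius a w)]

lemma moebius_zero (a : ℂ) : moebius a 0 = a := by simp [moebius]

lemma moebius_neg (a w : ℂ) : moebius (-a) w = (w - a) / (1 - conj a * w) := by
  simp [moebius, neg_add_eq_sub, sub_eq_add_neg]

lemma moebius_moebius_neg {a w : ℂ} (ha : ‖a‖ < 1) (hw : ‖w‖ < 1) :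
    moebius a (moebius (-a) w) = w := by
  have hD : 1 - conj a * w ≠ 0 := by
    simpa [sub_eq_add_neg] using one_add_conj_mul_ne_zero (a := -a) (by rwa [norm_neg]) hw
  have ha' : (1 : ℂ) - a * conj a ≠ 0 := by
    rw [Complex.mul_conj', ← Complex.ofReal_pow, ← Complex.ofReal_one, ← Complex.ofReal_sub]
    exact Complex.ofReal_ne_zero.2 (one_sub_norm_sq_pos ha).ne'
  rw [moebius_neg, moebius, mul_div_assoc', add_div' _ _ _ hD, add_div' _ _ _ hD,
    div_div_div_cancel_right₀ hD, div_eq_iff]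
  · ring
  · contrapose! ha'
    linear_combination ha'

lemma norm_moebius_neg_comm (a b : ℂ) : ‖moebius (-a) b‖ = ‖moebius (-b) a‖ := by
  have hD : ‖1 + conj (-a) * b‖ = ‖1 + conj (-b) * a‖ := by
    rw [← RCLike.norm_conj (1 + conj (-b) * a)]
    simp [mul_comm]
  rw [moebius, moebius, norm_div, norm_div, hD, neg_add_eq_sub, neg_add_eq_sub, norm_sub_rev]

lemma hasDerivAt_moebius {a w : ℂ} (hD : 1 + conj a * w ≠ 0) :
    HasDerivAt (moebius a) (((1 - ‖a‖ ^ 2 : ℝ) : ℂ) / (1 + conj a * w) ^ 2) w := by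
  refine (((hasDerivAt_id w).const_add a).div
    (((hasDerivAt_id w).const_mul (conj a)).const_add 1) hD).congr_deriv ?_
  push_cast
  rw [← Complex.mul_conj']
  simp only [id]
  ring

lemma Real.hasDerivAt_tanh (x : ℝ) : HasDerivAt tanh (1 - tanh x ^ 2) x := by
  have hquot := (Real.hasDerivAt_sinh x).div (Real.hasDerivAt_cosh x) (Real.cosh_pos x).ne'
  rw [show sinh / cosh = tanh from funext fun y => (Real.tanh_eq_sinh_div_cosh y).symm] at hquot
  refine hquot.congr_deriv ?_
  rw [Real.tanh_eq_sinh_div_cosh]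
  field_simp

def HasUnitHypSpeedAt (γ : ℝ → ℂ) (s : ℝ) : Prop :=
  ∃ u : ℂ, ‖u‖ = 1 ∧ HasDerivAt γ (((1 - ‖γ s‖ ^ 2 : ℝ) : ℂ) * u) s

lemma hasUnitHypSpeedAt_radial {η : ℂ} (hη : ‖η‖ = 1) (s : ℝ) :
    HasUnitHypSpeedAt (fun t => η * (Real.tanh t : ℂ)) s := by
  refine ⟨η, hη, ((Real.hasDerivAt_tanh s).ofReal_comp.const_mul η).congr_deriv ?_⟩
  rw [norm_mul, hη, one_mul, Complex.norm_real, Real.norm_eq_abs, sq_abs]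
  push_cast
  ring

lemma HasUnitHypSpeedAt.moebius_comp {γ : ℝ → ℂ} {s : ℝ} {a : ℂ} (ha : ‖a‖ < 1)
    (hs : ‖γ s‖ < 1) (hγ : HasUnitHypSpeedAt γ s) :
    HasUnitHypSpeedAt (fun t => moebius a (γ t)) s := by
  obtain ⟨u, hu, hγ⟩ := hγ
  set D := 1 + conj a * γ s with hD_def
  have hD : D ≠ 0 := one_add_conj_mul_ne_zero ha hs
  have hD' : conj D ≠ 0 := (map_ne_zero _).2 hD
  have hM := hasDerivAt_moebius hD
  rw [← hD_def] at hM
  refine ⟨u * (conj D / D), ?_, (hM.comp s hγ).congr_deriv ?_⟩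
  · rw [norm_mul, norm_div, RCLike.norm_conj, div_self (norm_ne_zero_iff.2 hD), hu, mul_one]
  · rw [one_sub_norm_sq_moebius hD]
    push_cast
    rw [← Complex.mul_conj' D]
    field_simp

lemma hypDist_eq_artanh {z w : ℂ} (hz : z ∈ 𝔻) (hw : w ∈ 𝔻) :
    hypDist z w = Real.artanh ‖moebius (-w) z‖ := by
  have hlt := norm_moebius_lt_one (by rwa [norm_neg, ← mem_𝔻_iff]) (mem_𝔻_iff.1 hz)
  rw [hypDist, ← moebius_neg,
    Real.artanh_eq_half_log ⟨by linarith [norm_nonneg (moebius (-w) z)], hlt.le⟩]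

lemma hypDist_nonneg {z w : ℂ} (hz : z ∈ 𝔻) (hw : w ∈ 𝔻) : 0 ≤ hypDist z w := by
  rw [hypDist_eq_artanh hz hw]
  exact Real.artanh_nonneg (norm_nonneg _)

theorem exists_geodesic {z₀ z₁ : ℂ} (h₀ : z₀ ∈ 𝔻) (h₁ : z₁ ∈ 𝔻) :
    ∃ γ : ℝ → ℂ, γ 0 = z₀ ∧ γ (hypDist z₀ z₁) = z₁ ∧
      ∀ s, γ s ∈ 𝔻 ∧ HasUnitHypSpeedAt γ s := by
  set u := moebius (-z₀) z₁
  have hu : ‖u‖ < 1 := norm_moebius_lt_one (by rwa [norm_neg, ← mem_𝔻_iff]) (mem_𝔻_iff.1 h₁)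
  set η := Complex.exp (u.arg * Complex.I)
  have hη : ‖η‖ = 1 := Complex.norm_exp_ofReal_mul_I _
  have hρ : Real.tanh (hypDist z₀ z₁) = ‖u‖ := by
    rw [hypDist_eq_artanh h₀ h₁, norm_moebius_neg_comm,
      Real.tanh_artanh ⟨by linarith [norm_nonneg u], hu⟩]
  have hr : ∀ s, ‖η * (Real.tanh s : ℂ)‖ < 1 := fun s => by
    rw [norm_mul, hη, one_mul, Complex.norm_real, Real.norm_eq_abs]
    exact Real.abs_tanh_lt_one s
  refine ⟨fun s => moebius z₀ (η * (Real.tanh s : ℂ)), by simp [moebius_zero], ?_, fun s =>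
    ⟨mem_𝔻_iff.2 (norm_moebius_lt_one (mem_𝔻_iff.1 h₀) (hr s)),
      (hasUnitHypSpeedAt_radial hη s).moebius_comp (mem_𝔻_iff.1 h₀) (hr s)⟩⟩
  simp only [hρ]
  rw [mul_comm, Complex.norm_mul_exp_arg_mul_I, moebius_moebius_neg (mem_𝔻_iff.1 h₀)
    (mem_𝔻_iff.1 h₁)]

theorem SensePreserving.abs_log_scaledJac_sub_le {h g : ℂ → ℂ} (hf : SensePreserving h g)
    {α : ℝ} (hα : ∀ z ∈ 𝔻, ‖Af h g z‖ ≤ α) {z₀ z₁ : ℂ} (h₀ : z₀ ∈ 𝔻) (h₁ : z₁ ∈ 𝔻) :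
    |Real.log (scaledJac h g z₁) - Real.log (scaledJac h g z₀)| ≤ 2 * α * hypDist z₀ z₁ := by
  obtain ⟨γ, hγ₀, hγ₁, hγ⟩ := exists_geodesic h₀ h₁
  choose u hu hγ' using fun s => (hγ s).2
  have hderiv : ∀ x ∈ Icc 0 (hypDist z₀ z₁),
      HasDerivWithinAt (fun t => Real.log (scaledJac h g (γ t)))
        (2 * (Af h g (γ x) * u x).re) (Icc 0 (hypDist z₀ z₁)) x := fun x _ =>
    (hf.hasDerivAt_log_scaledJac_of_arclength (hγ x).1 (hγ' x)).hasDerivWithinAt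
  have hbound : ∀ x ∈ Ico 0 (hypDist z₀ z₁), ‖2 * (Af h g (γ x) * u x).re‖ ≤ 2 * α := by
    intro x _
    rw [Real.norm_eq_abs, abs_mul, abs_two]
    gcongr
    calc |(Af h g (γ x) * u x).re| ≤ ‖Af h g (γ x) * u x‖ := Complex.abs_re_le_norm _
      _ = ‖Af h g (γ x)‖ := by rw [norm_mul, hu, mul_one]
      _ ≤ α := hα _ (hγ x).1
  simpa [hγ₀, hγ₁] using norm_image_sub_le_of_norm_deriv_le_segment' hderiv hbound _
    (right_mem_Icc.2 (hypDist_nonneg h₀ h₁))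

lemma Real.exp_neg_le_div_and_div_le_exp_of_abs_log_sub_le {x y c : ℝ} (hx : 0 < x)
    (hy : 0 < y) (h : |Real.log y - Real.log x| ≤ c) :
    Real.exp (-c) ≤ y / x ∧ y / x ≤ Real.exp c := by
  rw [← Real.exp_log (div_pos hy hx), Real.log_div hy.ne' hx.ne', Real.exp_le_exp,
    Real.exp_le_exp]
  exact abs_le.1 h

/-- along a curve γ parametrized by hyperbolic arclength
(γ'(s) = (1-|γ(s)|²)e^{iθ(s)}), one has
(d/ds) log((1-|γ|²)J_f(γ)^{1/2}) = 2 Re(A_f(γ)e^{iθ}); consequently, if |A_f| ≤ α on 𝔻,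
then exp(-2αρ(z₀,z₁)) ≤ ((1-|z₁|²)J_f(z₁)^{1/2})/((1-|z₀|²)J_f(z₀)^{1/2}) ≤ exp(2αρ(z₀,z₁)). -/
theorem stmt_15 (h g : ℂ → ℂ) (hf : SensePreserving h g) :
    (∀ (γ : ℝ → ℂ) (θ : ℝ → ℝ) (L : ℝ), 0 ≤ L →
      (∀ s ∈ Set.Icc 0 L, γ s ∈ 𝔻) →
      (∀ s ∈ Set.Icc 0 L,
        HasDerivAt γ ((((1 - ‖(γ s)‖ ^ 2 : ℝ) : ℂ)) * Complex.exp (Complex.I * (θ s : ℂ))) s) →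
      ∀ s ∈ Set.Icc 0 L,
        HasDerivAt (fun t => Real.log ((1 - ‖(γ t)‖ ^ 2) * Real.sqrt (Jf h g (γ t))))
          (2 * (Af h g (γ s) * Complex.exp (Complex.I * (θ s : ℂ))).re) s) ∧
    (∀ α : ℝ, (∀ z ∈ 𝔻, ‖(Af h g z)‖ ≤ α) →
      ∀ z₀ ∈ 𝔻, ∀ z₁ ∈ 𝔻,
        Real.exp (-(2 * α * hypDist z₀ z₁)) ≤
            ((1 - ‖z₁‖ ^ 2) * Real.sqrt (Jf h g z₁)) /
              ((1 - ‖z₀‖ ^ 2) * Real.sqrt (Jf h g z₀)) ∧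
        ((1 - ‖z₁‖ ^ 2) * Real.sqrt (Jf h g z₁)) /
            ((1 - ‖z₀‖ ^ 2) * Real.sqrt (Jf h g z₀)) ≤
          Real.exp (2 * α * hypDist z₀ z₁)) := by
  refine ⟨fun γ θ L _ hmem hderiv s hs =>
    hf.hasDerivAt_log_scaledJac_of_arclength (hmem s hs) (hderiv s hs), ?_⟩
  intro α hα z₀ h₀ z₁ h₁
  exact Real.exp_neg_le_div_and_div_le_exp_of_abs_log_sub_le (hf.scaledJac_pos h₀)
    (hf.scaledJac_pos h₁) (hf.abs_log_scaledJac_sub_le hα h₀ h₁)
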